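/- For ω > 0 and ν ≥ 1, the function ψ(R) = R·exp(−ω(e^R − 1)^ν) on (0, ∞) has a stationary point exactly where R·ω·ν·e^R·(e^R − 1)^{ν−1} = 1, and such a stationary point exists and is unique. -/

import Mathlib

/-!
Writing `g R = R ω ν e^R (e^R - 1)^(ν-1)` (`throughputFOC ω ν` below), the chain rule gives
`ψ'(R) = exp(-ω(e^R - 1)^ν) · (1 - g R)`, so the stationary points are the roots of `g = 1`.
For `ν ≥ 1` every factor of `g` is nonnegative and nondecreasing on `(0, ∞)`, and `R e^R` is
strictly increasing, so `g` is injective there; since `g 0 = 0` and `g ≥ 1` at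
`R = 1 + 1/(ων)`, the intermediate value theorem supplies the root.
-/

open Real Set

noncomputable def throughputFOC (ω ν R : ℝ) : ℝ := R * ω * ν * exp R * (exp R - 1) ^ (ν - 1)

lemma continuous_throughputFOC (ω : ℝ) {ν : ℝ} (hν : 1 ≤ ν) : Continuous (throughputFOC ω ν) := by
  unfold throughputFOC
  fun_prop (disch := linarith)

lemma throughputFOC_strictMonoOn {ω ν : ℝ} (hω : 0 < ω) (hν : 1 ≤ ν) :
    StrictMonoOn (throughputFOC ω ν) (Ioi 0) := by
  intro x (hx : 0 < x) y (hy : 0 < y) hxy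
  have hex : 0 < exp x - 1 := by linarith [add_one_lt_exp hx.ne']
  have hexy : exp x - 1 ≤ exp y - 1 := by gcongr
  calc throughputFOC ω ν x < y * ω * ν * exp y * (exp x - 1) ^ (ν - 1) := by
        unfold throughputFOC; gcongr
    _ ≤ throughputFOC ω ν y := by unfold throughputFOC; gcongr

lemma exists_throughputFOC_eq_one {ω ν : ℝ} (hω : 0 < ω) (hν : 1 ≤ ν) :
    ∃ R, 0 < R ∧ throughputFOC ω ν R = 1 := by
  have hων : 0 < ω * ν := by positivity
  set b := 1 + (ω * ν)⁻¹
  have hb1 : 1 ≤ b := le_add_of_nonneg_right (inv_nonneg.2 hων.le)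
  have hb : 1 ≤ b * (ω * ν) := by
    rw [add_mul, inv_mul_cancel₀ hων.ne']
    linarith
  have hgb : 1 ≤ throughputFOC ω ν b := by
    have heb : 1 ≤ exp b - 1 := by linarith [add_one_le_exp b]
    calc (1 : ℝ) = 1 * 1 * 1 := by norm_num
      _ ≤ b * (ω * ν) * exp b * (exp b - 1) ^ (ν - 1) := by
        gcongr
        · exact one_le_exp (by linarith)
        · exact one_le_rpow heb (by linarith)
      _ = throughputFOC ω ν b := by unfold throughputFOC; ring
  obtain ⟨R, hR, hR1⟩ := intermediate_value_Icc (zero_le_one.trans hb1)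
    (continuous_throughputFOC ω hν).continuousOn
    (show (1:ℝ) ∈ Icc (throughputFOC ω ν 0) (throughputFOC ω ν b) from
      ⟨by simp [throughputFOC], hgb⟩)
  refine ⟨R, hR.1.lt_of_ne ?_, hR1⟩
  rintro rfl
  simp [throughputFOC] at hR1

lemma hasDerivAt_mul_exp_neg_rpow (ω ν : ℝ) {R : ℝ} (hR : R ≠ 0) :
    HasDerivAt (fun R => R * exp (-(ω * (exp R - 1) ^ ν)))
      (exp (-(ω * (exp R - 1) ^ ν)) * (1 - throughputFOC ω ν R)) R := by
  have hE : exp R - 1 ≠ 0 := sub_ne_zero.2 (mt (exp_eq_one_iff R).1 hR)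
  refine ((hasDerivAt_id' R).fun_mul
    ((((hasDerivAt_exp R).sub_const 1).rpow_const (p := ν) (Or.inl hE)).const_mul ω).fun_neg.exp
    ).congr_deriv ?_
  unfold throughputFOC
  ring

lemma deriv_mul_exp_neg_rpow_eq_zero_iff (ω ν : ℝ) {R : ℝ} (hR : R ≠ 0) :
    deriv (fun R => R * exp (-(ω * (exp R - 1) ^ ν))) R = 0 ↔ throughputFOC ω ν R = 1 := by
  rw [(hasDerivAt_mul_exp_neg_rpow ω ν hR).deriv, mul_eq_zero,
    or_iff_right (exp_ne_zero _), sub_eq_zero, eq_comm]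

/-- for `ω > 0` and `ν ≥ 1`, `ψ(R) = R·exp(−ω(e^R − 1)^ν)` on `(0,∞)`
has a stationary point exactly where `R·ω·ν·e^R·(e^R − 1)^{ν−1} = 1`, and such a
stationary point exists and is unique. -/
theorem statement6
    (ω ν : ℝ) (hω : 0 < ω) (hν : 1 ≤ ν)
    (ψ : ℝ → ℝ) (hψ : ∀ R, ψ R = R * Real.exp (-(ω * (Real.exp R - 1) ^ ν))) :
    (∀ R : ℝ, 0 < R →
      (deriv ψ R = 0 ↔
        R * ω * ν * Real.exp R * (Real.exp R - 1) ^ (ν - 1) = 1)) ∧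
    (∃! R : ℝ, 0 < R ∧
      R * ω * ν * Real.exp R * (Real.exp R - 1) ^ (ν - 1) = 1) := by
  obtain rfl : ψ = fun R => R * exp (-(ω * (exp R - 1) ^ ν)) := funext hψ
  refine ⟨fun R hR => deriv_mul_exp_neg_rpow_eq_zero_iff ω ν hR.ne', ?_⟩
  obtain ⟨R, hR, hR1⟩ := exists_throughputFOC_eq_one hω hν
  refine ⟨R, ⟨hR, hR1⟩, fun S ⟨hS, hS1⟩ => ?_⟩
  exact (throughputFOC_strictMonoOn hω hν).injOn hS hR (hS1.trans hR1.symm)
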